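/- arXiv:1706.00841 — 7 statements merged into one kernel-verified Lean document; each statement's English description precedes it below -/
import Mathlib

section
/- Let q ≥ 2 and k ≥ 1 be integers whose greatest common divisor is greater than 1. Then for every q-ary sequence x of length k there exists an index z with 0 ≤ z ≤ kq−1 such that the weight of y = x ⊕_q b(z) satisfies (k−2)(q−1) ≤ 2·w(y) ≤ (k+2)(q−1), i.e. β_{k,q} − (q−1) ≤ w(y) ≤ β_{k,q} + (q−1) where β_{k,q} = k(q−1)/2. -/
/-- Weight of a q-ary sequence: sum of its symbols. -/
def wt {k : ℕ} (x : Fin k → ℕ) : ℕ := ∑ i, x i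

/-- Weighting sequence b(s,p): b_i = (s+1) mod q if i-1 < p, else s
    (indices here are 0-based, so the condition is i < p). -/
def bvec (q k s p : ℕ) : Fin k → ℕ := fun i => if (i : ℕ) < p then (s + 1) % q else s

/-- The z-th weighting sequence b(z) = b(s,p) where z = s·k + p, 0 ≤ p ≤ k-1. -/
def bz (q k z : ℕ) : Fin k → ℕ := bvec q k (z / k) (z % k)

/-- Symbol-wise addition modulo q. -/
def addq (q : ℕ) {k : ℕ} (x y : Fin k → ℕ) : Fin k → ℕ := fun i => (x i + y i) % q

/-!
For `z = s·k` the sequence `b(z)` is constant `s`, so `x ⊕_q b(s·k)` is `x` shifted by `s`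
coordinatewise mod `q`; averaging over `s < q` each coordinate runs through `0, …, q-1`, so
these `q` weights have mean `k(q-1)/2`. Passing from `z` to `z+1` changes only coordinate
`z mod k` of `x ⊕_q b(z)`, so the weight moves by at most `q-1`. A discrete intermediate value
argument between a below-average and an above-average `s·k` then gives the claim.
-/

open Finset

theorem Nat.exists_crossing {P : ℕ → Prop} {a b : ℕ} (hab : a ≤ b) (ha : P a) (hb : ¬P b) :
    ∃ n, a ≤ n ∧ n < b ∧ P n ∧ ¬P (n + 1) := by
  by_contra! h
  have hP : ∀ n, a ≤ n → n ≤ b → P n := fun n han =>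
    Nat.le_induction (fun _ => ha) (fun n han ih hnb => h n han hnb (ih (by omega))) n han
  exact hb (hP b hab le_rfl)

theorem exists_le_max_mem_Icc_of_abs_sub_le {g : ℕ → ℤ} {m c : ℤ}
    (hg : ∀ n, |g (n + 1) - g n| ≤ m) {a b : ℕ} (ha : g a ≤ c) (hb : c ≤ g b) :
    ∃ n ≤ max a b, g n ∈ Set.Icc c (c + m) := by
  have hm : 0 ≤ m := (abs_nonneg _).trans (hg 0)
  by_cases hca : c ≤ g a
  · exact ⟨a, le_max_left a b, hca, by linarith⟩
  rcases le_total a b with hab | hba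
  · obtain ⟨n, -, hnb, hn, hn1⟩ :=
      Nat.exists_crossing (P := fun n => g n < c) hab (not_le.mp hca) (not_lt.mpr hb)
    refine ⟨n + 1, by omega, not_lt.mp hn1, ?_⟩
    linarith [(abs_le.mp (hg n)).2]
  · obtain ⟨n, -, hna, hn, hn1⟩ := Nat.exists_crossing (P := fun n => c ≤ g n) hba hb hca
    refine ⟨n, by omega, hn, ?_⟩
    linarith [(abs_le.mp (hg n)).1]

theorem Finset.sum_range_add_mod (a q : ℕ) [NeZero q] :
    ∑ s ∈ range q, (a + s) % q = ∑ s ∈ range q, s := by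
  have := Equiv.sum_comp (Equiv.addLeft (Fin.ofNat q a)) (fun s => (s : ℕ))
  simpa [Fin.val_add, Fin.sum_univ_eq_sum_range (fun s => (a + s) % q),
    Fin.sum_univ_eq_sum_range (fun s => s)] using this

theorem abs_wt_sub_le {k q : ℕ} {u v : Fin k → ℕ} (hu : ∀ i, u i < q) (hv : ∀ i, v i < q)
    (p : Fin k) (huv : ∀ i ≠ p, u i = v i) : |(wt u : ℤ) - wt v| ≤ q - 1 := by
  have hsplit : ∀ w : Fin k → ℕ, wt w = w p + ∑ i ∈ univ.erase p, w i := fun w =>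
    (add_sum_erase _ _ (mem_univ p)).symm
  have hrest : ∑ i ∈ univ.erase p, u i = ∑ i ∈ univ.erase p, v i :=
    sum_congr rfl fun i hi => huv i (ne_of_mem_erase hi)
  rw [hsplit u, hsplit v, hrest, abs_le]
  have := hu p
  have := hv p
  constructor <;> push_cast <;> omega

theorem addq_lt {q k : ℕ} (hq : 0 < q) (x y : Fin k → ℕ) (i : Fin k) : addq q x y i < q :=
  Nat.mod_lt _ hq

theorem bz_modEq_count {q k : ℕ} (hk : 0 < k) (z : ℕ) (i : Fin k) :
    bz q k z i ≡ Nat.count (· ≡ i [MOD k]) z [MOD q] := by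
  rw [Nat.count_modEq_card _ hk, Nat.mod_eq_of_lt i.isLt]
  unfold bz bvec
  split_ifs
  · exact Nat.mod_modEq _ _
  · rfl

theorem addq_bz_succ_of_ne {q k : ℕ} (hk : 0 < k) (x : Fin k → ℕ) {z : ℕ} {i : Fin k}
    (hi : i ≠ ⟨z % k, Nat.mod_lt _ hk⟩) :
    addq q x (bz q k (z + 1)) i = addq q x (bz q k z) i := by
  have hz : ¬z ≡ i [MOD k] := fun h => hi (Fin.ext (by
    rw [Nat.ModEq, Nat.mod_eq_of_lt i.isLt] at h; exact h.symm))
  refine Nat.ModEq.add_left _ ?_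
  calc bz q k (z + 1) i ≡ Nat.count (· ≡ i [MOD k]) (z + 1) [MOD q] := bz_modEq_count hk _ _
    _ = Nat.count (· ≡ i [MOD k]) z := by simp [Nat.count_succ, hz]
    _ ≡ bz q k z i [MOD q] := (bz_modEq_count hk _ _).symm

theorem bz_mul_self {q k : ℕ} (hk : 0 < k) (s : ℕ) (i : Fin k) : bz q k (s * k) i = s := by
  simp [bz, bvec, Nat.mul_div_cancel _ hk]

theorem abs_wt_addq_bz_succ_sub_le {q k : ℕ} (hq : 0 < q) (hk : 0 < k) (x : Fin k → ℕ) (z : ℕ) :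
    |(wt (addq q x (bz q k (z + 1))) : ℤ) - wt (addq q x (bz q k z))| ≤ q - 1 :=
  abs_wt_sub_le (addq_lt hq _ _) (addq_lt hq _ _) _ fun _ hi => addq_bz_succ_of_ne hk x hi

theorem sum_wt_addq_bz_mul_self {q k : ℕ} (hq : 0 < q) (hk : 0 < k) (x : Fin k → ℕ) :
    ∑ s ∈ range q, wt (addq q x (bz q k (s * k))) = k * ∑ s ∈ range q, s := by
  have : NeZero q := ⟨hq.ne'⟩
  simp_rw [wt, addq, bz_mul_self hk]
  rw [sum_comm]
  simp [sum_range_add_mod]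

theorem stmt0_general (q k : ℕ) (hq : 2 ≤ q) (hk : 1 ≤ k) (x : Fin k → ℕ) :
    ∃ z : ℕ, z ≤ k * q - 1 ∧
      ((k : ℤ) - 2) * ((q : ℤ) - 1) ≤ 2 * (wt (addq q x (bz q k z)) : ℤ) ∧
      2 * (wt (addq q x (bz q k z)) : ℤ) ≤ ((k : ℤ) + 2) * ((q : ℤ) - 1) := by
  have hq0 : 0 < q := by omega
  set g : ℕ → ℤ := fun z => 2 * (wt (addq q x (bz q k z)) : ℤ)
  have hstep : ∀ z, |g (z + 1) - g z| ≤ 2 * (q - 1) := fun z => by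
    rw [← mul_sub, abs_mul, abs_two]
    linarith [abs_wt_addq_bz_succ_sub_le hq0 hk x z]
  have hmean : ∑ s ∈ range q, g (s * k) = ∑ s ∈ range q, (k : ℤ) * (q - 1) := by
    calc ∑ s ∈ range q, g (s * k) = ((k * ((∑ s ∈ range q, s) * 2) : ℕ) : ℤ) := by
          simp only [g, ← mul_sum]
          rw [← Nat.cast_sum, sum_wt_addq_bz_mul_self hq0 hk]
          push_cast; ring
      _ = ∑ s ∈ range q, (k : ℤ) * (q - 1) := by
          rw [sum_range_id_mul_two, sum_const, card_range, nsmul_eq_mul]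
          push_cast [Nat.cast_sub (by omega : 1 ≤ q)]; ring
  have hne : (range q).Nonempty := nonempty_range_iff.mpr hq0.ne'
  obtain ⟨a, ha, hga⟩ := exists_le_of_sum_le hne hmean.le
  obtain ⟨b, hb, hgb⟩ := exists_le_of_sum_le hne hmean.ge
  obtain ⟨z, hz, hlo, hhi⟩ := exists_le_max_mem_Icc_of_abs_sub_le hstep hga hgb
  have hlt : ∀ s ∈ range q, s * k < k * q := fun s hs => by nlinarith [mem_range.mp hs]
  have hzq : z < k * q := hz.trans_lt (max_lt (hlt a ha) (hlt b hb))
  exact ⟨z, Nat.le_sub_one_of_lt hzq, by linarith, by linarith⟩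

/-- if gcd(q,k) > 1, every q-ary sequence x of length k admits a z,
    0 ≤ z ≤ kq-1, with β_{k,q} - (q-1) ≤ w(x ⊕_q b(z)) ≤ β_{k,q} + (q-1),
    i.e. (k-2)(q-1) ≤ 2·w(x ⊕_q b(z)) ≤ (k+2)(q-1). -/
theorem stmt0 (q k : ℕ) (hq : 2 ≤ q) (hk : 1 ≤ k) (hgcd : 1 < Nat.gcd q k)
    (x : Fin k → ℕ) (hx : ∀ i, x i < q) :
    ∃ z : ℕ, z ≤ k * q - 1 ∧
      ((k : ℤ) - 2) * ((q : ℤ) - 1) ≤ 2 * (wt (addq q x (bz q k z)) : ℤ) ∧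
      2 * (wt (addq q x (bz q k z)) : ℤ) ≤ ((k : ℤ) + 2) * ((q : ℤ) - 1) :=
  stmt0_general q k hq hk x
end

section
/- Let q ≥ 2 and k ≥ 1 be integers and x a q-ary sequence of length k. For every index z with 0 ≤ z ≤ kq−2, the weight change from one weighting step to the next satisfies w(x ⊕_q b(z+1)) − w(x ⊕_q b(z)) ∈ {1, −(q−1)}; that is, the weight progression of z ↦ w(x ⊕_q b(z)) is a path whose steps are increases of 1 or decreases of q−1. -/
/-!
Modulo `q`, the `i`-th symbol of `b(z)` is `⌊z / k⌋ + [i < z mod k]`, a counter that passing from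
`z` to `z + 1` increments at the single coordinate `i = z mod k`. Hence `x ⊕_q b(z + 1)` differs
from `x ⊕_q b(z)` in one symbol `t`, which becomes `(t + 1) mod q`: the weight goes up by `1`, or
down by `q - 1` when `t = q - 1` wraps around to `0`.
-/

def bzCount (k z i : ℕ) : ℕ := z / k + if i < z % k then 1 else 0

lemma bzCount_succ {k z i : ℕ} (hi : i < k) :
    bzCount k (z + 1) i = bzCount k z i + if i = z % k then 1 else 0 := by
  have hz := Nat.div_add_mod z k
  have hz₁ := Nat.div_add_mod (z + 1) k
  have hp := Nat.mod_lt z (by omega : 0 < k)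
  have hp₁ := Nat.mod_lt (z + 1) (by omega : 0 < k)
  rw [Nat.succ_div, mul_add, mul_ite, mul_one, mul_zero] at hz₁
  unfold bzCount
  rw [Nat.succ_div]
  split_ifs at hz₁ ⊢ <;> omega

lemma addq_bz_apply (q k z : ℕ) (x : Fin k → ℕ) (i : Fin k) :
    addq q x (bz q k z) i = (x i + bzCount k z i) % q := by
  unfold addq bz bvec bzCount
  split_ifs
  · exact Nat.add_mod_mod _ _ _
  · rfl

lemma natCast_add_one_mod_sub_mod (q a : ℕ) :
    (((a + 1) % q : ℕ) : ℤ) - ((a % q : ℕ) : ℤ) = 1 ∨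
      (((a + 1) % q : ℕ) : ℤ) - ((a % q : ℕ) : ℤ) = -((q : ℤ) - 1) := by
  rcases Nat.eq_zero_or_pos q with rfl | hq
  · left; simp
  rw [← Nat.mod_add_mod]
  have ha := Nat.mod_lt a hq
  rcases Nat.lt_or_ge (a % q + 1) q with h | h
  · left; rw [Nat.mod_eq_of_lt h]; push_cast; ring
  · right; rw [show a % q + 1 = q by omega, Nat.mod_self]; push_cast; omega

lemma wt_sub_wt_of_forall_ne {k : ℕ} {f g : Fin k → ℕ} (i₀ : Fin k)
    (h : ∀ i, i ≠ i₀ → g i = f i) : (wt g : ℤ) - wt f = g i₀ - f i₀ := by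
  unfold wt
  push_cast
  rw [← Finset.sum_sub_distrib]
  exact Finset.sum_eq_single_of_mem i₀ (Finset.mem_univ _) fun i _ hi => by rw [h i hi, sub_self]

theorem stmt3_general (q k : ℕ) (hk : 1 ≤ k)
    (x : Fin k → ℕ) :
    ∀ z : ℕ, z ≤ k * q - 2 →
      (wt (addq q x (bz q k (z + 1))) : ℤ) - (wt (addq q x (bz q k z)) : ℤ) = 1 ∨
      (wt (addq q x (bz q k (z + 1))) : ℤ) - (wt (addq q x (bz q k z)) : ℤ) = -((q : ℤ) - 1) := by
  intro z _
  let i₀ : Fin k := ⟨z % k, Nat.mod_lt z hk⟩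
  rw [wt_sub_wt_of_forall_ne i₀ fun i hi => ?_]
  · rw [addq_bz_apply, addq_bz_apply, bzCount_succ i₀.isLt, if_pos rfl, ← add_assoc]
    exact natCast_add_one_mod_sub_mod q _
  · rw [addq_bz_apply, addq_bz_apply, bzCount_succ i.isLt, if_neg fun h => hi (Fin.ext h),
      add_zero]

/-- each step of the weight progression z ↦ w(x ⊕_q b(z)) is either an
    increase of 1 or a decrease of q-1. -/
theorem stmt3 (q k : ℕ) (hq : 2 ≤ q) (hk : 1 ≤ k)
    (x : Fin k → ℕ) (hx : ∀ i, x i < q) :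
    ∀ z : ℕ, z ≤ k * q - 2 →
      (wt (addq q x (bz q k (z + 1))) : ℤ) - (wt (addq q x (bz q k z)) : ℤ) = 1 ∨
      (wt (addq q x (bz q k (z + 1))) : ℤ) - (wt (addq q x (bz q k z)) : ℤ) = -((q : ℤ) - 1) :=
  stmt3_general q k hk x
end

section
/- Let q ≥ 2 and k ≥ 1 be integers and x a q-ary sequence of length k. Then the weight progression of z ↦ w(x ⊕_q b(z)) is cyclic with the same step rule at the wrap-around: w(x ⊕_q b(0)) − w(x ⊕_q b(kq−1)) ∈ {1, −(q−1)}. -/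
theorem bz_zero (q k : ℕ) : bz q k 0 = 0 := by
  ext i
  simp [bz, bvec]

theorem bz_mul_sub_one (q n : ℕ) :
    bz q (n + 1) ((n + 1) * q - 1) = Pi.single (Fin.last n) (q - 1) := by
  rcases q with _ | m
  · ext i
    simp [bz, bvec]
  have hz : (n + 1) * (m + 1) - 1 = n + m * (n + 1) := by ring_nf; omega
  have hdiv : ((n + 1) * (m + 1) - 1) / (n + 1) = m := by
    rw [hz, Nat.add_mul_div_right _ _ n.succ_pos, Nat.div_eq_of_lt n.lt_succ_self, zero_add]
  have hmod : ((n + 1) * (m + 1) - 1) % (n + 1) = n := by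
    rw [hz, Nat.add_mul_mod_self_right, Nat.mod_eq_of_lt n.lt_succ_self]
  ext i
  rcases (Fin.le_last i).lt_or_eq with hi | rfl
  · have hin : (i : ℕ) < n := hi
    simp [bz, bvec, hdiv, hmod, hin, hi.ne]
  · simp [bz, bvec, hdiv, hmod]

theorem addq_zero {q k : ℕ} {x : Fin k → ℕ} (hx : ∀ i, x i < q) : addq q x 0 = x := by
  ext i
  simp [addq, Nat.mod_eq_of_lt (hx i)]

theorem addq_single {q k : ℕ} {x : Fin k → ℕ} (hx : ∀ i, x i < q) (j : Fin k) (c : ℕ) :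
    addq q x (Pi.single j c) = Function.update x j ((x j + c) % q) := by
  ext i
  rcases eq_or_ne i j with rfl | h
  · simp [addq]
  · simp [addq, h, Nat.mod_eq_of_lt (hx i)]

theorem wt_sub_wt_update {k : ℕ} (x : Fin k → ℕ) (j : Fin k) (v : ℕ) :
    (wt x : ℤ) - wt (Function.update x j v) = x j - v := by
  rw [wt, wt, ← Finset.add_sum_erase _ _ (Finset.mem_univ j),
    Finset.sum_update_of_mem (Finset.mem_univ j), Finset.sdiff_singleton_eq_erase]
  push_cast
  ring

theorem natCast_sub_add_pred_mod {q a : ℕ} (ha : a < q) :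
    (a : ℤ) - ((a + (q - 1)) % q : ℕ) = 1 ∨ (a : ℤ) - ((a + (q - 1)) % q : ℕ) = -((q : ℤ) - 1) := by
  rcases a with _ | b
  · right
    rw [zero_add, Nat.mod_eq_of_lt (by omega)]
    push_cast [Nat.cast_sub (by omega : 1 ≤ q)]
    ring
  · left
    rw [show b + 1 + (q - 1) = b + q by omega, Nat.add_mod_right, Nat.mod_eq_of_lt (by omega)]
    push_cast
    ring

theorem stmt4_general (q k : ℕ) (hk : 1 ≤ k)
    (x : Fin k → ℕ) (hx : ∀ i, x i < q) :
    (wt (addq q x (bz q k 0)) : ℤ) - (wt (addq q x (bz q k (k * q - 1))) : ℤ) = 1 ∨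
    (wt (addq q x (bz q k 0)) : ℤ) - (wt (addq q x (bz q k (k * q - 1))) : ℤ) = -((q : ℤ) - 1) := by
  obtain ⟨n, rfl⟩ : ∃ n, k = n + 1 := ⟨k - 1, by omega⟩
  rw [bz_zero, addq_zero hx, bz_mul_sub_one, addq_single hx, wt_sub_wt_update]
  exact natCast_sub_add_pred_mod (hx _)

/-- the weight progression z ↦ w(x ⊕_q b(z)) is cyclic with the same step
    rule at the wrap-around: w(x ⊕_q b(0)) - w(x ⊕_q b(kq-1)) ∈ {1, -(q-1)}. -/
theorem stmt4 (q k : ℕ) (hq : 2 ≤ q) (hk : 1 ≤ k)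
    (x : Fin k → ℕ) (hx : ∀ i, x i < q) :
    (wt (addq q x (bz q k 0)) : ℤ) - (wt (addq q x (bz q k (k * q - 1))) : ℤ) = 1 ∨
    (wt (addq q x (bz q k 0)) : ℤ) - (wt (addq q x (bz q k (k * q - 1))) : ℤ) = -((q : ℤ) - 1) :=
  stmt4_general q k hk x hx
end

section
/- Let q ≥ 2 and k ≥ 1 be integers and x a q-ary sequence of length k. Then the sum over all kq weighting sequences of the weights of x ⊕_q b(z) equals kq times the balancing value: Σ_{z=0}^{kq−1} w(x ⊕_q b(z)) = k²q(q−1)/2. Equivalently, the average of w(x ⊕_q b(z)) over 0 ≤ z ≤ kq−1 is exactly β_{k,q} = k(q−1)/2. -/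
open Finset

section

variable {M : Type*} [AddCommMonoid M]

theorem Finset.sum_range_mod_add (f : ℕ → M) (a q : ℕ) :
    ∑ s ∈ range q, f ((a + s) % q) = ∑ s ∈ range q, f s := by
  calc ∑ s ∈ range q, f ((a + s) % q) = ∑ n ∈ Ico a (a + q), f (n % q) := by
        rw [range_eq_Ico, sum_Ico_add (fun n => f (n % q)), zero_add, add_comm q a]
    _ = ∑ s ∈ range q, f s := by
        rw [sum_eq_multiset_sum, sum_eq_multiset_sum, range_val, ← Nat.multiset_Ico_map_mod a q,
          Multiset.map_map]
        rfl

theorem Finset.sum_range_mul_div_mod (f : ℕ → ℕ → M) (k q : ℕ) :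
    ∑ z ∈ range (k * q), f (z / k) (z % k) = ∑ s ∈ range q, ∑ p ∈ range k, f s p := by
  induction q with
  | zero => simp
  | succ q ih =>
    rw [Nat.mul_succ, sum_range_add, ih, sum_range_succ]
    congr 1
    refine sum_congr rfl fun p hp => ?_
    have hpk : p < k := mem_range.mp hp
    rw [Nat.mul_add_div (Nat.zero_lt_of_lt hpk), Nat.div_eq_of_lt hpk, add_zero, Nat.mul_add_mod,
      Nat.mod_eq_of_lt hpk]

theorem sum_range_bvec_apply (f : ℕ → M) (q k p : ℕ) (i : Fin k) :
    ∑ s ∈ range q, f (bvec q k s p i) = ∑ s ∈ range q, f s := by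
  by_cases hip : (i : ℕ) < p
  · simpa only [bvec, hip, if_true, add_comm] using sum_range_mod_add f 1 q
  · simp only [bvec, hip, if_false]

end

theorem sum_range_wt_addq_bvec (q k p : ℕ) (x : Fin k → ℕ) :
    ∑ s ∈ range q, wt (addq q x (bvec q k s p)) = k * ∑ s ∈ range q, s := by
  simp only [wt, addq]
  rw [sum_comm]
  calc ∑ i, ∑ s ∈ range q, (x i + bvec q k s p i) % q = ∑ _i : Fin k, ∑ s ∈ range q, s :=
        sum_congr rfl fun i _ =>
          (sum_range_bvec_apply (fun t => (x i + t) % q) q k p i).trans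
            (sum_range_mod_add id (x i) q)
    _ = k * ∑ s ∈ range q, s := by rw [sum_const, card_univ, Fintype.card_fin, smul_eq_mul]

theorem stmt5_general (q k : ℕ) (x : Fin k → ℕ) :
    2 * ∑ z ∈ Finset.range (k * q), wt (addq q x (bz q k z)) = k ^ 2 * q * (q - 1) := by
  have hsum : ∑ z ∈ range (k * q), wt (addq q x (bz q k z)) = k * (k * ∑ s ∈ range q, s) :=
    calc ∑ z ∈ range (k * q), wt (addq q x (bz q k z))
        = ∑ s ∈ range q, ∑ p ∈ range k, wt (addq q x (bvec q k s p)) :=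
          sum_range_mul_div_mod (fun s p => wt (addq q x (bvec q k s p))) k q
      _ = k * (k * ∑ s ∈ range q, s) := by
          rw [sum_comm]
          simp only [sum_range_wt_addq_bvec, sum_const, card_range, smul_eq_mul]
  rw [hsum, mul_assoc, ← sum_range_id_mul_two q]
  ring

/-- the sum over all kq weighting sequences of the weights w(x ⊕_q b(z))
    equals k²q(q-1)/2, i.e. the average over 0 ≤ z ≤ kq-1 is exactly β_{k,q} = k(q-1)/2. -/
theorem stmt5 (q k : ℕ) (hq : 2 ≤ q) (hk : 1 ≤ k)
    (x : Fin k → ℕ) (hx : ∀ i, x i < q) :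
    2 * ∑ z ∈ Finset.range (k * q), wt (addq q x (bz q k z)) = k ^ 2 * q * (q - 1) :=
  stmt5_general q k x
end

section
/- Let q ≥ 2 and k ≥ 1 be integers and x a q-ary sequence of length k. Let m = min_{0 ≤ z ≤ kq−1} w(x ⊕_q b(z)) and M = max_{0 ≤ z ≤ kq−1} w(x ⊕_q b(z)). Then for every integer W with m ≤ W ≤ M there exists an index z with 0 ≤ z ≤ kq−1 such that w(x ⊕_q b(z)) = W; that is, every intermediate weight value between the minimum and the maximum is attained by the weight progression. -/
theorem Nat.add_one_mod_le (a q : ℕ) : (a + 1) % q ≤ a % q + 1 :=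
  Nat.mod_add_mod a q 1 ▸ Nat.mod_le _ _

theorem Nat.exists_map_eq_of_map_succ_le_add_one {f : ℕ → ℕ} (hf : ∀ n, f (n + 1) ≤ f n + 1)
    {a b W : ℕ} (hab : a ≤ b) (ha : f a ≤ W) (hb : W ≤ f b) : ∃ c, a ≤ c ∧ c ≤ b ∧ f c = W := by
  induction b, hab using Nat.le_induction with
  | base => exact ⟨a, le_rfl, le_rfl, le_antisymm ha hb⟩
  | succ b hab ih =>
    by_cases hWb : W ≤ f b
    · obtain ⟨c, hac, hcb, hc⟩ := ih hWb
      exact ⟨c, hac, hcb.trans b.le_succ, hc⟩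
    · exact ⟨b + 1, hab.trans b.le_succ, le_rfl, by have := hf b; omega⟩

theorem bz_mul_add (q : ℕ) {k p : ℕ} (s : ℕ) (hp : p < k) :
    bz q k (k * s + p) = bvec q k s p := by
  have hk : 0 < k := by omega
  rw [bz, Nat.mul_add_div hk, Nat.div_eq_of_lt hp, Nat.mul_add_mod, Nat.mod_eq_of_lt hp, add_zero]

theorem bz_succ_mod (q k z : ℕ) (i : Fin k) :
    bz q k (z + 1) i % q = (bz q k z i + if (i : ℕ) = z % k then 1 else 0) % q := by
  obtain ⟨s, p, hp, rfl⟩ : ∃ s p, p < k ∧ z = k * s + p :=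
    ⟨z / k, z % k, Nat.mod_lt z i.pos, (Nat.div_add_mod z k).symm⟩
  rw [bz_mul_add q s hp, Nat.mul_add_mod, Nat.mod_eq_of_lt hp]
  have hi := i.isLt
  rcases Nat.lt_or_eq_of_le (Nat.succ_le_of_lt hp) with hp' | hp'
  · rw [add_assoc, bz_mul_add q s hp']
    simp only [bvec]
    split_ifs <;> first | omega | simp
  · rw [show k * s + p + 1 = k * (s + 1) + 0 by rw [Nat.mul_succ]; omega, bz_mul_add q _ (by omega)]
    simp only [bvec]
    split_ifs <;> first | omega | simp

theorem addq_bz_succ_le (q k z : ℕ) (x : Fin k → ℕ) (i : Fin k) :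
    addq q x (bz q k (z + 1)) i ≤ addq q x (bz q k z) i + if (i : ℕ) = z % k then 1 else 0 := by
  rw [addq, addq, Nat.add_mod (x i), bz_succ_mod, Nat.add_mod_mod, Nat.mod_add_mod, ← add_assoc]
  split_ifs
  · exact Nat.add_one_mod_le _ _
  · simp

theorem Fin.sum_ite_val_eq_le_one (k p : ℕ) : ∑ i : Fin k, (if (i : ℕ) = p then 1 else 0) ≤ 1 := by
  rw [Finset.sum_boole, Nat.cast_id]
  exact Finset.card_le_one.2 fun a ha b hb => Fin.ext <| by simp_all

def weightProgression (q : ℕ) {k : ℕ} (x : Fin k → ℕ) (z : ℕ) : ℕ := wt (addq q x (bz q k z))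

theorem weightProgression_succ_le (q : ℕ) {k : ℕ} (x : Fin k → ℕ) (z : ℕ) :
    weightProgression q x (z + 1) ≤ weightProgression q x z + 1 :=
  calc weightProgression q x (z + 1)
      ≤ ∑ i, (addq q x (bz q k z) i + if (i : ℕ) = z % k then 1 else 0) :=
        Finset.sum_le_sum (s := Finset.univ) fun i _ => addq_bz_succ_le q k z x i
    _ = weightProgression q x z + ∑ i : Fin k, (if (i : ℕ) = z % k then 1 else 0) :=
        Finset.sum_add_distrib
    _ ≤ weightProgression q x z + 1 := Nat.add_le_add_left (Fin.sum_ite_val_eq_le_one k _) _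

theorem bz_add_mul_mod (q k z : ℕ) (i : Fin k) : bz q k (z + k * q) i % q = bz q k z i % q := by
  obtain ⟨s, p, hp, rfl⟩ : ∃ s p, p < k ∧ z = k * s + p :=
    ⟨z / k, z % k, Nat.mod_lt z i.pos, (Nat.div_add_mod z k).symm⟩
  rw [show k * s + p + k * q = k * (s + q) + p by ring, bz_mul_add q _ hp, bz_mul_add q _ hp]
  simp only [bvec]
  split_ifs
  · rw [Nat.mod_mod, Nat.mod_mod, add_right_comm, Nat.add_mod_right]
  · exact Nat.add_mod_right s q

theorem periodic_weightProgression (q : ℕ) {k : ℕ} (x : Fin k → ℕ) :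
    Function.Periodic (weightProgression q x) (k * q) := fun z => by
  unfold weightProgression addq
  simp_rw [Nat.add_mod (x _), bz_add_mul_mod]

theorem stmt7_general (q k : ℕ) (hq : 2 ≤ q) (hk : 1 ≤ k)
    (x : Fin k → ℕ) (W : ℕ)
    (hm : ∃ z₁ : ℕ, z₁ ≤ k * q - 1 ∧ wt (addq q x (bz q k z₁)) ≤ W)
    (hM : ∃ z₂ : ℕ, z₂ ≤ k * q - 1 ∧ W ≤ wt (addq q x (bz q k z₂))) :
    ∃ z : ℕ, z ≤ k * q - 1 ∧ wt (addq q x (bz q k z)) = W := by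
  obtain ⟨z₁, hz₁, h₁⟩ := hm
  obtain ⟨z₂, -, h₂⟩ := hM
  have hkq : 0 < k * q := Nat.mul_pos hk (by omega)
  have hper := periodic_weightProgression q x
  obtain ⟨c, -, -, hc⟩ := Nat.exists_map_eq_of_map_succ_le_add_one (weightProgression_succ_le q x)
    (a := z₁) (b := z₂ + k * q) (by omega) h₁ (by rw [hper z₂]; exact h₂)
  exact ⟨c % (k * q), by have := Nat.mod_lt c hkq; omega, (hper.map_mod_nat c).trans hc⟩

/-- every intermediate weight value W between the minimum and the maximum
    of the weight progression z ↦ w(x ⊕_q b(z)), 0 ≤ z ≤ kq-1, is attained.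
    (m ≤ W is expressed as: some z₁ has weight ≤ W; W ≤ M as: some z₂ has weight ≥ W.) -/
theorem stmt7 (q k : ℕ) (hq : 2 ≤ q) (hk : 1 ≤ k)
    (x : Fin k → ℕ) (hx : ∀ i, x i < q) (W : ℕ)
    (hm : ∃ z₁ : ℕ, z₁ ≤ k * q - 1 ∧ wt (addq q x (bz q k z₁)) ≤ W)
    (hM : ∃ z₂ : ℕ, z₂ ≤ k * q - 1 ∧ W ≤ wt (addq q x (bz q k z₂))) :
    ∃ z : ℕ, z ≤ k * q - 1 ∧ wt (addq q x (bz q k z)) = W :=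
  stmt7_general q k hq hk x W hm hM
end

section
/- Let q ≥ 2 and r' ≥ 1 be integers. If d and d' are q-ary sequences of length r' that are consecutive in lexicographic order, i.e. the base-q integer value of d' (most significant digit first) equals the base-q integer value of d plus 1, then the Gray codewords E(d) and E(d') differ in exactly one symbol position, and at that position the two symbols differ by exactly 1; consequently |w(E(d')) − w(E(d))| = 1. -/
/-- (r',q)-Gray encoding, with accumulator S = sum of already-produced Gray symbols:
    g_i = d_i if S is even, g_i = q-1-d_i if S is odd.  E(d) = grayEnc q 0 d. -/
def grayEnc (q : ℕ) : ℕ → List ℕ → List ℕ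
  | _, [] => []
  | S, d :: ds =>
      let g := if S % 2 = 0 then d else q - 1 - d
      g :: grayEnc q (S + g) ds

/-- The base-q integer value of a digit string, most significant digit first. -/
def valBE (q : ℕ) (l : List ℕ) : ℕ := l.foldl (fun a d => a * q + d) 0

/-!
Adding 1 to `d` increments one digit `d_j` and turns the run of `q - 1`s after it into `0`s.
The prefixes agree, so they are encoded identically and reach position `j` with the same
accumulator `S`; there the Gray symbol is `d_j` or `q - 1 - d_j` according to the parity of `S`,
so it moves by exactly 1. This flips the parity of the accumulator, and under opposite parities
a run of `q - 1`s and a run of `0`s are encoded by the same symbols, so the suffixes agree too.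
-/

lemma Nat.eq_and_eq_of_mul_add_eq_mul_add {Q a b v w : ℕ} (hv : v < Q) (hw : w < Q)
    (h : a * Q + v = b * Q + w) : a = b ∧ v = w := by
  have hQ : 0 < Q := by omega
  obtain ⟨ha, hv'⟩ := (Nat.div_mod_unique hQ).2 ⟨(by ring : v + Q * a = a * Q + v), hv⟩
  obtain ⟨hb, hw'⟩ := (Nat.div_mod_unique hQ).2 ⟨(by ring : w + Q * b = b * Q + w), hw⟩
  rw [h] at ha hv'
  exact ⟨ha.symm.trans hb, hv'.symm.trans hw'⟩

section valBE

variable {q : ℕ}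

lemma foldl_mul_add_eq_mul_pow_add_valBE (l : List ℕ) (a : ℕ) :
    l.foldl (fun a d => a * q + d) a = a * q ^ l.length + valBE q l := by
  induction l generalizing a with
  | nil => simp [valBE]
  | cons b l ih =>
    have hcons : valBE q (b :: l) = b * q ^ l.length + valBE q l := by
      rw [valBE, List.foldl_cons, ih, zero_mul, zero_add]
    rw [List.foldl_cons, ih, hcons, List.length_cons, pow_succ]
    ring

lemma valBE_cons (b : ℕ) (l : List ℕ) :
    valBE q (b :: l) = b * q ^ l.length + valBE q l := by
  rw [valBE, List.foldl_cons, foldl_mul_add_eq_mul_pow_add_valBE, zero_mul, zero_add]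

lemma valBE_lt_pow {l : List ℕ} (hl : ∀ x ∈ l, x < q) : valBE q l < q ^ l.length := by
  induction l with
  | nil => simp [valBE]
  | cons b l ih =>
    have hb : b < q := hl b List.mem_cons_self
    have hv := ih fun x hx => hl x (List.mem_cons_of_mem b hx)
    calc valBE q (b :: l) = b * q ^ l.length + valBE q l := valBE_cons b l
      _ < (b + 1) * q ^ l.length := by linarith
      _ ≤ q * q ^ l.length := Nat.mul_le_mul_right _ hb
      _ = q ^ (b :: l).length := by rw [List.length_cons, pow_succ']

lemma eq_replicate_zero_of_valBE_eq_zero (hq : 0 < q) {l : List ℕ} (h : valBE q l = 0) :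
    l = List.replicate l.length 0 := by
  induction l with
  | nil => rfl
  | cons b l ih =>
    rw [valBE_cons, Nat.add_eq_zero_iff, mul_eq_zero] at h
    obtain ⟨hb | hpow, hv⟩ := h
    · rw [hb, List.length_cons, List.replicate_succ, ← ih hv]
    · exact absurd hpow (pow_ne_zero _ hq.ne')

lemma eq_replicate_pred_of_valBE_add_one_eq_pow {l : List ℕ} (hl : ∀ x ∈ l, x < q)
    (h : valBE q l + 1 = q ^ l.length) : l = List.replicate l.length (q - 1) := by
  induction l with
  | nil => rfl
  | cons b l ih =>
    have hb : b < q := hl b List.mem_cons_self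
    have htail : ∀ x ∈ l, x < q := fun x hx => hl x (List.mem_cons_of_mem b hx)
    have hv := valBE_lt_pow htail
    rw [valBE_cons, List.length_cons, pow_succ'] at h
    -- `b * Q + (v + 1) = q * Q + 0` would force `v + 1 = 0` if `v + 1 < Q`
    obtain hcarry | hcarry := (show valBE q l + 1 ≤ _ from hv).lt_or_eq
    · have hshift : b * q ^ l.length + (valBE q l + 1) = q * q ^ l.length + 0 := by
        rw [← add_assoc, h, add_zero]
      have := (Nat.eq_and_eq_of_mul_add_eq_mul_add hcarry (Nat.zero_lt_of_lt hv) hshift).2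
      omega
    · have hbq : b + 1 = q :=
        Nat.eq_of_mul_eq_mul_right (Nat.zero_lt_of_lt hv) (by rw [add_mul, one_mul]; omega)
      rw [List.length_cons, List.replicate_succ, ← ih htail hcarry]
      congr 1
      omega

lemma valBE_cons_eq_succ_cases {a a' : ℕ} {l l' : List ℕ} (hlen : l.length = l'.length)
    (hd : ∀ x ∈ a :: l, x < q) (hd' : ∀ x ∈ a' :: l', x < q)
    (h : valBE q (a' :: l') = valBE q (a :: l) + 1) :
    (a' = a ∧ valBE q l' = valBE q l + 1) ∨
      (a' = a + 1 ∧ l = List.replicate l.length (q - 1) ∧ l' = List.replicate l'.length 0) := by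
  have htail : ∀ x ∈ l, x < q := fun x hx => hd x (List.mem_cons_of_mem a hx)
  have htail' : ∀ x ∈ l', x < q := fun x hx => hd' x (List.mem_cons_of_mem a' hx)
  have hv := valBE_lt_pow htail
  have hv' := valBE_lt_pow htail'
  rw [valBE_cons, valBE_cons, ← hlen] at h
  rw [← hlen] at hv'
  obtain hcarry | hcarry := (show valBE q l + 1 ≤ _ from hv).lt_or_eq
  · left
    exact Nat.eq_and_eq_of_mul_add_eq_mul_add hv' hcarry (by rw [h, add_assoc])
  · right
    have hshift : a' * q ^ l.length + valBE q l' = (a + 1) * q ^ l.length + 0 := by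
      rw [add_mul, one_mul]; omega
    obtain ⟨ha, hzero⟩ :=
      Nat.eq_and_eq_of_mul_add_eq_mul_add hv' (Nat.zero_lt_of_lt hv) hshift
    exact ⟨ha, eq_replicate_pred_of_valBE_add_one_eq_pow htail hcarry,
      eq_replicate_zero_of_valBE_eq_zero (Nat.zero_lt_of_lt (hd a List.mem_cons_self)) hzero⟩

end valBE

section grayEnc

variable {q : ℕ}

lemma grayEnc_cons (S a : ℕ) (l : List ℕ) :
    grayEnc q S (a :: l) =
      (if S % 2 = 0 then a else q - 1 - a) ::
        grayEnc q (S + (if S % 2 = 0 then a else q - 1 - a)) l := rfl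

lemma length_grayEnc (S : ℕ) (l : List ℕ) : (grayEnc q S l).length = l.length := by
  induction l generalizing S with
  | nil => rfl
  | cons a l ih => rw [grayEnc_cons, List.length_cons, List.length_cons, ih]

lemma grayEnc_replicate_pred_eq_grayEnc_replicate_zero (n : ℕ) {S S' : ℕ}
    (h : S % 2 ≠ S' % 2) :
    grayEnc q S (List.replicate n (q - 1)) = grayEnc q S' (List.replicate n 0) := by
  induction n generalizing S S' with
  | zero => rfl
  | succ n ih =>
    rw [List.replicate_succ, List.replicate_succ, grayEnc_cons, grayEnc_cons]
    by_cases hS : S % 2 = 0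
    · rw [if_pos hS, if_neg (by omega), Nat.sub_zero]
      exact congrArg _ (ih (by omega))
    · rw [if_neg hS, if_pos (by omega), Nat.sub_self]
      exact congrArg _ (ih (by omega))

theorem grayEnc_eq_append_cons_of_valBE_eq_succ {d d' : List ℕ} (S : ℕ)
    (hlen : d.length = d'.length) (hd : ∀ x ∈ d, x < q) (hd' : ∀ x ∈ d', x < q)
    (h : valBE q d' = valBE q d + 1) :
    ∃ P g g' T, grayEnc q S d = P ++ g :: T ∧ grayEnc q S d' = P ++ g' :: T ∧
      (g + 1 = g' ∨ g' + 1 = g) := by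
  induction d generalizing d' S with
  | nil =>
    rw [List.length_nil, eq_comm, List.length_eq_zero_iff] at hlen
    subst hlen
    simp [valBE] at h
  | cons a l ih =>
    obtain _ | ⟨a', l'⟩ := d'
    · simp at hlen
    have hlen' : l.length = l'.length := Nat.succ_injective hlen
    rw [grayEnc_cons, grayEnc_cons]
    obtain ⟨rfl, htail⟩ | ⟨rfl, hl, hl'⟩ := valBE_cons_eq_succ_cases hlen' hd hd' h
    · obtain ⟨P, g, g', T, hP, hP', hg⟩ := ih _ hlen'
        (fun x hx => hd x (List.mem_cons_of_mem _ hx))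
        (fun x hx => hd' x (List.mem_cons_of_mem _ hx)) htail
      exact ⟨_ :: P, g, g', T, by rw [hP, List.cons_append], by rw [hP', List.cons_append], hg⟩
    · set g := if S % 2 = 0 then a else q - 1 - a
      set g' := if S % 2 = 0 then a + 1 else q - 1 - (a + 1)
      have ha : a + 1 < q := hd' _ List.mem_cons_self
      have hpar : (S + g) % 2 ≠ (S + g') % 2 := by simp only [g, g']; split_ifs <;> omega
      refine ⟨[], g, g', grayEnc q (S + g) l, rfl, ?_, by simp only [g, g']; split_ifs <;> omega⟩
      rw [hl, hl', ← hlen', List.nil_append,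
        grayEnc_replicate_pred_eq_grayEnc_replicate_zero _ hpar]

end grayEnc

lemma List.getD_append_cons_eq_of_ne {α : Type*} (P T : List α) (g g' x : α) {i : ℕ}
    (hi : i ≠ P.length) : (P ++ g :: T).getD i x = (P ++ g' :: T).getD i x := by
  obtain hi | hi := hi.lt_or_gt
  · rw [List.getD_append _ _ _ _ hi, List.getD_append _ _ _ _ hi]
  · rw [List.getD_append_right _ _ _ _ hi.le, List.getD_append_right _ _ _ _ hi.le,
      ← Nat.sub_add_cancel (Nat.sub_pos_of_lt hi), List.getD_cons_succ, List.getD_cons_succ]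

theorem stmt11_general (q r' : ℕ)
    (d d' : List ℕ) (hd : d.length = r') (hd' : d'.length = r')
    (hdq : ∀ a ∈ d, a < q) (hd'q : ∀ a ∈ d', a < q)
    (hsucc : valBE q d' = valBE q d + 1) :
    (∃ j : ℕ, j < r' ∧
      (∀ i : ℕ, i < r' → i ≠ j →
        (grayEnc q 0 d).getD i 0 = (grayEnc q 0 d').getD i 0) ∧
      ((grayEnc q 0 d).getD j 0 + 1 = (grayEnc q 0 d').getD j 0 ∨
        (grayEnc q 0 d').getD j 0 + 1 = (grayEnc q 0 d).getD j 0)) ∧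
    (((grayEnc q 0 d').sum : ℤ) - ((grayEnc q 0 d).sum : ℤ) = 1 ∨
      ((grayEnc q 0 d').sum : ℤ) - ((grayEnc q 0 d).sum : ℤ) = -1) := by
  obtain ⟨P, g, g', T, hE, hE', hg⟩ :=
    grayEnc_eq_append_cons_of_valBE_eq_succ 0 (hd.trans hd'.symm) hdq hd'q hsucc
  have hlen : P.length < r' := by
    have := length_grayEnc (q := q) 0 d
    rw [hE, List.length_append, List.length_cons] at this
    omega
  rw [hE, hE']
  refine ⟨⟨P.length, hlen, fun i _ hi => List.getD_append_cons_eq_of_ne P T g g' 0 hi, ?_⟩, ?_⟩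
  · simpa only [List.getD_append_right _ _ _ _ le_rfl, Nat.sub_self, List.getD_cons_zero]
  · simp only [List.sum_append, List.sum_cons]
    omega

/-- if d and d' are q-ary sequences of length r' consecutive in
    lexicographic order (valBE q d' = valBE q d + 1), then the Gray codewords E(d) and
    E(d') differ in exactly one position, at that position the symbols differ by
    exactly 1, and consequently |w(E(d')) - w(E(d))| = 1. -/
theorem stmt11 (q r' : ℕ) (hq : 2 ≤ q) (hr' : 1 ≤ r')
    (d d' : List ℕ) (hd : d.length = r') (hd' : d'.length = r')
    (hdq : ∀ a ∈ d, a < q) (hd'q : ∀ a ∈ d', a < q)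
    (hsucc : valBE q d' = valBE q d + 1) :
    (∃ j : ℕ, j < r' ∧
      (∀ i : ℕ, i < r' → i ≠ j →
        (grayEnc q 0 d).getD i 0 = (grayEnc q 0 d').getD i 0) ∧
      ((grayEnc q 0 d).getD j 0 + 1 = (grayEnc q 0 d').getD j 0 ∨
        (grayEnc q 0 d').getD j 0 + 1 = (grayEnc q 0 d).getD j 0)) ∧
    (((grayEnc q 0 d').sum : ℤ) - ((grayEnc q 0 d).sum : ℤ) = 1 ∨
      ((grayEnc q 0 d').sum : ℤ) - ((grayEnc q 0 d).sum : ℤ) = -1) :=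
  stmt11_general q r' d d' hd hd' hdq hd'q hsucc
end

section
/- Let q ≥ 2 and k ≥ 1 be integers. The kq weighting sequences are pairwise distinct: the map z ↦ b(z) is injective on {0, 1, …, kq−1}; equivalently, b(s,p) = b(s',p') with 0 ≤ s, s' ≤ q−1 and 0 ≤ p, p' ≤ k−1 implies s = s' and p = p'. -/
/-!
The last entry of `b(s,p)` is always `s`, which recovers `s`. For `p < p'` the two sequences
`b(s,p)` and `b(s,p')` differ at index `p`, where they read `s` and `(s+1) mod q`; these differ
because `q ≥ 2` and `s < q`. Finally `z ↦ (z / k, z % k)` is injective.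
-/

theorem Nat.succ_mod_ne_self {q s : ℕ} (hq : 2 ≤ q) (hs : s < q) : (s + 1) % q ≠ s := by
  rcases Nat.lt_or_ge (s + 1) q with hlt | hge
  · rw [Nat.mod_eq_of_lt hlt]
    exact Nat.succ_ne_self s
  · rw [show s + 1 = q by omega, Nat.mod_self]
    omega

section

variable {q k s p : ℕ}

theorem bvec_apply_of_lt {i : Fin k} (h : (i : ℕ) < p) : bvec q k s p i = (s + 1) % q :=
  if_pos h

theorem bvec_apply_of_le {i : Fin k} (h : p ≤ i) : bvec q k s p i = s :=
  if_neg (Nat.not_lt.mpr h)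

theorem bvec_fst_eq_of_eq {s' p' : ℕ} (hp : p < k) (hp' : p' < k)
    (h : bvec q k s p = bvec q k s' p') : s = s' := by
  have hlast := congrFun h ⟨k - 1, by omega⟩
  rwa [bvec_apply_of_le (Nat.le_sub_one_of_lt hp),
    bvec_apply_of_le (Nat.le_sub_one_of_lt hp')] at hlast

theorem bvec_ne_of_lt {p' : ℕ} (hq : 2 ≤ q) (hs : s < q) (hpp' : p < p') (hp' : p' ≤ k) :
    bvec q k s p ≠ bvec q k s p' := by
  intro h
  let i : Fin k := ⟨p, by omega⟩
  have hp := congrFun h i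
  rw [bvec_apply_of_le (show p ≤ (i : ℕ) from le_rfl), bvec_apply_of_lt hpp'] at hp
  exact Nat.succ_mod_ne_self hq hs hp.symm

theorem bvec_eq_and_eq_of_eq {s' p' : ℕ} (hq : 2 ≤ q) (hs : s < q) (hp : p < k) (hp' : p' < k)
    (h : bvec q k s p = bvec q k s' p') : s = s' ∧ p = p' := by
  obtain rfl := bvec_fst_eq_of_eq hp hp' h
  refine ⟨rfl, ?_⟩
  rcases lt_trichotomy p p' with hlt | heq | hgt
  · exact absurd h (bvec_ne_of_lt hq hs hlt hp'.le)
  · exact heq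
  · exact absurd h.symm (bvec_ne_of_lt hq hs hgt hp.le)

end

theorem bz_injOn {q k : ℕ} (hq : 2 ≤ q) : Set.InjOn (bz q k) (Set.Iio (k * q)) := by
  intro z hz z' hz' h
  have hk : 0 < k := Nat.pos_of_mul_pos_right (Nat.zero_lt_of_lt hz)
  obtain ⟨hdiv, hmod⟩ := bvec_eq_and_eq_of_eq hq (Nat.div_lt_of_lt_mul hz)
    (Nat.mod_lt z hk) (Nat.mod_lt z' hk) h
  rw [← Nat.div_add_mod z k, ← Nat.div_add_mod z' k, hdiv, hmod]

/-- the kq weighting sequences are pairwise distinct: z ↦ b(z) is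
    injective on {0,…,kq-1}; equivalently b(s,p) = b(s',p') with 0 ≤ s,s' ≤ q-1 and
    0 ≤ p,p' ≤ k-1 implies s = s' and p = p'. -/
theorem stmt12 (q k : ℕ) (hq : 2 ≤ q) (hk : 1 ≤ k) :
    Set.InjOn (bz q k) {z : ℕ | z ≤ k * q - 1} ∧
    (∀ s p s' p' : ℕ, s ≤ q - 1 → p ≤ k - 1 → s' ≤ q - 1 → p' ≤ k - 1 →
      bvec q k s p = bvec q k s' p' → s = s' ∧ p = p') := by
  have hkq : 0 < k * q := Nat.mul_pos hk (by omega)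
  refine ⟨(bz_injOn hq).mono fun z hz => ?_, ?_⟩
  · exact Set.mem_Iio.mpr (by simp only [Set.mem_ofPred_eq] at hz; omega)
  · intro s p s' p' hs hp _ hp' h
    exact bvec_eq_and_eq_of_eq hq (by omega) (by omega) (by omega) h
end
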